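/- Let G be a transitive groupoid acting on the right on two families of sets F and F₁, let ω be a section of F and ω₁ a section of F₁, and assume F is homogeneous, i.e. for every object y the isotropy group G(y,y) acts transitively on F(y). Then Stab(ω) ⊆ Stab(ω₁) (i.e. every morphism f : x → y with ω(y)·f = ω(x) also satisfies ω₁(y)·f = ω₁(x)) if and only if there exists a G-equivariant map c : F → F₁ (meaning c : F(x) → F₁(x) for every object x with c(u·f) = c(u)·f for all morphisms f : x → y and all u ∈ F(y)) such that c(ω(x)) = ω₁(x) for every object x. -/

import Mathlib

open CategoryTheory

/-- A right action of a groupoid `G` on a family of sets `F`: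
to each object `x` a set `F x`, to each morphism `f : x ⟶ y` a map
`F y → F x`, `u ↦ u·f = act f u`, with `u·1 = u` and `(u·f)·g = u·(g ≫ f)`. -/
structure RightAction (G : Type*) [Groupoid G] where
  F : G → Type*
  act : ∀ {x y : G}, (x ⟶ y) → F y → F x
  act_id : ∀ (y : G) (u : F y), act (𝟙 y) u = u
  act_comp : ∀ {w x y : G} (g : w ⟶ x) (f : x ⟶ y) (u : F y),
    act g (act f u) = act (g ≫ f) u

/-!
If `Stab(ω) ⊆ Stab(ω₁)`, then `ω(y)·g ↦ ω₁(y)·g` is well defined: two morphisms `g, g'` with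
`ω(y)·g = ω(z)·g'` differ by `g'⁻¹ ≫ g ∈ Stab(ω) ⊆ Stab(ω₁)`. By homogeneity every element of
`F(x)` is of the form `ω(x)·g`, so this defines a map `c : F → F₁`, which is equivariant and sends
`ω` to `ω₁` by construction. Conversely, applying an equivariant `c` to `ω(y)·f = ω(x)` gives
`ω₁(y)·f = ω₁(x)`.
-/

namespace RightAction

variable {G : Type*} [Groupoid G] {A A₁ : RightAction G}

theorem act_inv_act {x y : G} (g : x ⟶ y) (u : A.F y) :
    A.act (Groupoid.inv g) (A.act g u) = u := by
  rw [A.act_comp, Groupoid.inv_comp, A.act_id]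

/-- `Stab(ω) ⊆ Stab(ω₁)`. -/
def StabilizerLE (ω : ∀ x : G, A.F x) (ω₁ : ∀ x : G, A₁.F x) : Prop :=
  ∀ {x y : G} (f : x ⟶ y), A.act f (ω y) = ω x → A₁.act f (ω₁ y) = ω₁ x

variable {ω : ∀ x : G, A.F x} {ω₁ : ∀ x : G, A₁.F x}

theorem StabilizerLE.act_eq_act (hstab : StabilizerLE ω ω₁) {x y z : G} {g : x ⟶ y}
    {g' : x ⟶ z} (h : A.act g (ω y) = A.act g' (ω z)) :
    A₁.act g (ω₁ y) = A₁.act g' (ω₁ z) := by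
  have hmem : A.act (Groupoid.inv g' ≫ g) (ω y) = ω z := by
    rw [← A.act_comp, h, act_inv_act]
  calc A₁.act g (ω₁ y) = A₁.act (g' ≫ Groupoid.inv g' ≫ g) (ω₁ y) := by
        rw [← Category.assoc, Groupoid.comp_inv, Category.id_comp]
    _ = A₁.act g' (ω₁ z) := by rw [← A₁.act_comp, hstab _ hmem]

variable (ω₁)

noncomputable def transport (hω : ∀ (x : G) (u : A.F x), ∃ g : x ⟶ x, A.act g (ω x) = u)
    (x : G) (u : A.F x) : A₁.F x :=
  A₁.act (hω x u).choose (ω₁ x)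

variable {ω₁} (hω : ∀ (x : G) (u : A.F x), ∃ g : x ⟶ x, A.act g (ω x) = u)

theorem StabilizerLE.transport_act_section (hstab : StabilizerLE ω ω₁) {x y : G} (g : x ⟶ y) :
    transport ω₁ hω x (A.act g (ω y)) = A₁.act g (ω₁ y) :=
  hstab.act_eq_act (hω x _).choose_spec

theorem StabilizerLE.transport_act (hstab : StabilizerLE ω ω₁) {x y : G} (f : x ⟶ y)
    (u : A.F y) : transport ω₁ hω x (A.act f u) = A₁.act f (transport ω₁ hω y u) := by
  obtain ⟨g, rfl⟩ := hω y u
  rw [A.act_comp, hstab.transport_act_section, hstab.transport_act_section, A₁.act_comp]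

theorem StabilizerLE.transport_section (hstab : StabilizerLE ω ω₁) (x : G) :
    transport ω₁ hω x (ω x) = ω₁ x := by
  simpa only [A.act_id, A₁.act_id] using hstab.transport_act_section hω (𝟙 x)

end RightAction

open RightAction in
theorem stabilizer_inclusion_iff_equivariant_map_general {G : Type*} [Groupoid G]
    (A A₁ : RightAction G) (ω : ∀ x : G, A.F x) (ω₁ : ∀ x : G, A₁.F x)
    (hhom : ∀ (y : G) (u v : A.F y), ∃ g : y ⟶ y, A.act g u = v) :
    (∀ {x y : G} (f : x ⟶ y),
        A.act f (ω y) = ω x → A₁.act f (ω₁ y) = ω₁ x) ↔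
    (∃ c : ∀ x : G, A.F x → A₁.F x,
      (∀ {x y : G} (f : x ⟶ y) (u : A.F y),
        c x (A.act f u) = A₁.act f (c y u)) ∧
      (∀ x : G, c x (ω x) = ω₁ x)) := by
  constructor
  · intro hstab
    have hω : ∀ x u, ∃ g : x ⟶ x, A.act g (ω x) = u := fun x => hhom x (ω x)
    have hstab : StabilizerLE ω ω₁ := hstab
    exact ⟨transport ω₁ hω, hstab.transport_act hω, hstab.transport_section hω⟩
  · rintro ⟨c, hequiv, hc⟩ x y f hf
    rw [← hc, ← hc, ← hf, hequiv]

/-- Let a transitive groupoid `G` act on families `F` (homogeneous) and `F₁`,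
with sections `ω`, `ω₁`. Then `Stab(ω) ⊆ Stab(ω₁)` if and only if there is a
`G`-equivariant map `c : F → F₁` with `c(ω(x)) = ω₁(x)` for every object `x`. -/
theorem stabilizer_inclusion_iff_equivariant_map {G : Type*} [Groupoid G]
    (A A₁ : RightAction G) (ω : ∀ x : G, A.F x) (ω₁ : ∀ x : G, A₁.F x)
    (htrans : ∀ x y : G, Nonempty (x ⟶ y))
    (hhom : ∀ (y : G) (u v : A.F y), ∃ g : y ⟶ y, A.act g u = v) :
    (∀ {x y : G} (f : x ⟶ y),
        A.act f (ω y) = ω x → A₁.act f (ω₁ y) = ω₁ x) ↔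
    (∃ c : ∀ x : G, A.F x → A₁.F x,
      (∀ {x y : G} (f : x ⟶ y) (u : A.F y),
        c x (A.act f u) = A₁.act f (c y u)) ∧
      (∀ x : G, c x (ω x) = ω₁ x)) :=
  stabilizer_inclusion_iff_equivariant_map_general A A₁ ω ω₁ hhom
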